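/- Let k ≥ 1, let A = Fin (2^k), and let n_b ≤ n_o with n_o ≥ 1. Let F be uniformly distributed on the set of all functions Fin n_o → A, fix a set D ⊆ Fin n_o with |D| = n_o − n_b, and let F' be the restriction of F to the complement of D (read in increasing order of position). Then the leakage L = (H(F) − H(F | F'))/H(F) equals n_b/n_o, where H denotes base-2 Shannon entropy. (This is the leakage to a weak adversary that has broken the PRNG.) -/
import Mathlib


/-- Base-2 Shannon entropy of a probability mass function on a finite type. -/
noncomputable def entropy2 {Ω : Type*} [Fintype Ω] (p : Ω → ℝ) : ℝ :=
  -∑ ω, p ω * Real.logb 2 (p ω)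

/-- Base-2 conditional Shannon entropy `H(F | g(F))` where `F` has probability mass
function `p`. -/
noncomputable def condEntropy2 {Ω S : Type*} [Fintype Ω] [DecidableEq S]
    (p : Ω → ℝ) (g : Ω → S) : ℝ :=
  -∑ ω, p ω * Real.logb 2 (p ω / ∑ ω', if g ω' = g ω then p ω' else 0)

open Finset Real in
/-- Uniform entropy. -/
lemma entropy2_uniform' {Ω : Type*} [Fintype Ω] [Nonempty Ω] :
    (-∑ _ω : Ω, ((Fintype.card Ω : ℝ))⁻¹ * Real.logb 2 ((Fintype.card Ω : ℝ))⁻¹)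
      = Real.logb 2 (Fintype.card Ω) := by
  have hc : (0:ℝ) < (Fintype.card Ω : ℝ) := by positivity
  rw [Finset.sum_const, Finset.card_univ, nsmul_eq_mul, Real.logb_inv]
  field_simp

/-- Conditional entropy for uniform distribution with equal fiber sizes. -/
lemma condEntropy2_uniform' {Ω S : Type*} [Fintype Ω] [Nonempty Ω] [DecidableEq S]
    (g : Ω → S) (m : ℕ) (hm : 0 < m)
    (hfib : ∀ ω : Ω, (Finset.univ.filter (fun ω' => g ω' = g ω)).card = m) :
    (-∑ ω : Ω, ((Fintype.card Ω : ℝ))⁻¹ *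
        Real.logb 2 (((Fintype.card Ω : ℝ))⁻¹ /
          ∑ ω', if g ω' = g ω then ((Fintype.card Ω : ℝ))⁻¹ else 0))
      = Real.logb 2 m := by
  have hc : (0:ℝ) < (Fintype.card Ω : ℝ) := by positivity
  have hm' : (0:ℝ) < (m:ℝ) := by exact_mod_cast hm
  have key : ∀ ω : Ω,
      (∑ ω', if g ω' = g ω then ((Fintype.card Ω : ℝ))⁻¹ else 0)
        = (m:ℝ) * ((Fintype.card Ω : ℝ))⁻¹ := by
    intro ω
    rw [← Finset.sum_filter, Finset.sum_const, nsmul_eq_mul, hfib ω]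
  have key2 : ∀ ω : Ω,
      ((Fintype.card Ω : ℝ))⁻¹ /
        (∑ ω', if g ω' = g ω then ((Fintype.card Ω : ℝ))⁻¹ else 0) = ((m:ℝ))⁻¹ := by
    intro ω
    rw [key ω]
    field_simp
  simp only [key2, Real.logb_inv]
  rw [Finset.sum_const, Finset.card_univ, nsmul_eq_mul]
  field_simp

/-- The leakage to a weak adversary that has broken the PRNG: if `F` is uniform on all files
`Fin n_o → Fin (2^k)` and `F'` is the restriction of `F` to the complement of the set `D` of
deleted positions (in increasing order of position), then
`L = (H(F) - H(F | F')) / H(F) = n_b / n_o`. -/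
theorem bonsai_weak_adversary_leakage_broken_prng (k n_b n_o : ℕ)
    (hk : 1 ≤ k) (h : n_b ≤ n_o) (hno : 1 ≤ n_o)
    (D : Finset (Fin n_o)) (hD : D.card = n_o - n_b) (hDc : Dᶜ.card = n_b) :
    (entropy2 (fun _ : Fin n_o → Fin (2 ^ k) =>
          ((Fintype.card (Fin n_o → Fin (2 ^ k)) : ℝ))⁻¹) -
        condEntropy2
          (fun _ : Fin n_o → Fin (2 ^ k) => ((Fintype.card (Fin n_o → Fin (2 ^ k)) : ℝ))⁻¹)
          (fun f => fun i : Fin n_b => f ↑(Dᶜ.orderIsoOfFin hDc i))) /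
      entropy2 (fun _ : Fin n_o → Fin (2 ^ k) =>
          ((Fintype.card (Fin n_o → Fin (2 ^ k)) : ℝ))⁻¹) =
      (n_b : ℝ) / (n_o : ℝ) := by
  classical
  set A := Fin (2 ^ k)
  set Ω := Fin n_o → A
  set g : Ω → (Fin n_b → A) := fun f => fun i : Fin n_b => f ↑(Dᶜ.orderIsoOfFin hDc i)
    with hg
  -- fiber size
  have hfib : ∀ ω : Ω,
      (Finset.univ.filter (fun ω' => g ω' = g ω)).card = (2 ^ k) ^ (n_o - n_b) := by
    intro ω
    have hiff : ∀ ω' : Ω, g ω' = g ω ↔ ∀ j ∈ Dᶜ, ω' j = ω j := by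
      intro ω'
      constructor
      · intro hgeq j hj
        have := congrFun hgeq ((Dᶜ.orderIsoOfFin hDc).symm ⟨j, hj⟩)
        simpa [g, ← Finset.coe_orderIsoOfFin_apply, OrderIso.apply_symm_apply] using this
      · intro hj
        funext i
        exact hj _ (Dᶜ.orderIsoOfFin hDc i).2
    rw [Finset.filter_congr (fun x _ => hiff x)]
    have : (Finset.univ.filter (fun ω' : Ω => ∀ j ∈ Dᶜ, ω' j = ω j)).card
        = Fintype.card {f : Ω // ∀ j ∈ Dᶜ, f j = ω j} := (Fintype.card_subtype _).symm
    rw [this]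
    have e : {f : Ω // ∀ j ∈ Dᶜ, f j = ω j} ≃ (↑D → A) :=
      { toFun := fun f j => f.1 j
        invFun := fun h => ⟨fun j => if hj : j ∈ D then h ⟨j, hj⟩ else ω j,
          fun j hj => by simp [Finset.mem_compl.mp hj]⟩
        left_inv := fun f => Subtype.ext (funext fun j => by
          by_cases hj : j ∈ D
          · simp [hj]
          · simp [hj, f.2 j (Finset.mem_compl.mpr hj)])
        right_inv := fun h => funext fun j => by simp }
    rw [Fintype.card_congr e, Fintype.card_fun, Fintype.card_coe, hD, Fintype.card_fin]
  -- entropy values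
  have hcard : Fintype.card Ω = (2 ^ k) ^ n_o := by
    simp [Ω, A, Fintype.card_fun]
  have hE : entropy2 (fun _ : Ω => ((Fintype.card Ω : ℝ))⁻¹)
      = Real.logb 2 (Fintype.card Ω) := entropy2_uniform'
  have hCE : condEntropy2 (fun _ : Ω => ((Fintype.card Ω : ℝ))⁻¹) g
      = Real.logb 2 ((2 ^ k) ^ (n_o - n_b) : ℕ) := by
    exact condEntropy2_uniform' g ((2 ^ k) ^ (n_o - n_b)) (by positivity) hfib
  rw [hE, hCE, hcard]
  have l1 : Real.logb 2 (((2 ^ k) ^ n_o : ℕ) : ℝ) = (k : ℝ) * n_o := by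
    push_cast
    rw [← pow_mul, Real.logb_pow]
    simp [Real.logb_self_eq_one]
  have l2 : Real.logb 2 (((2 ^ k) ^ (n_o - n_b) : ℕ) : ℝ) = (k : ℝ) * ((n_o : ℝ) - n_b) := by
    have hsub : ((n_o - n_b : ℕ) : ℝ) = (n_o : ℝ) - n_b := Nat.cast_sub h
    push_cast
    rw [← pow_mul, Real.logb_pow, Real.logb_self_eq_one one_lt_two, mul_one,
      Nat.cast_mul, hsub]
  rw [l1, l2]
  have hk0 : (0:ℝ) < k := by exact_mod_cast hk
  have hn0 : (0:ℝ) < n_o := by exact_mod_cast hno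
  field_simp
  ring
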